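/- arXiv:1209.0287 — 6 statements merged into one kernel-verified Lean document; each statement's English description precedes it below -/
import Mathlib

section
/- The move H4 is derivable from the homotopy moves: for all words x, y, z and every letter A not occurring in x, y, z, the word xAByABz is homotopic to xyz, where homotopy is the equivalence relation generated by isomorphism and the moves H1: xAAy ↔ xy, H2: xAByBAz ↔ xyz, H3: xAByACzBCt ↔ xBAyCAzCBt. -/
/-- A Gauss word: every letter that occurs, occurs exactly twice. -/
def IsGauss (w : List ℕ) : Prop := ∀ a ∈ w, w.count a = 2

/-- Rank of a word: the number of distinct letters occurring in it. -/
def rank (w : List ℕ) : ℕ := w.dedup.length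

/-- Two words are isomorphic if one is obtained from the other by an
injective (hence bijective onto its image) relabeling of letters. -/
def Isomorphic (w₁ w₂ : List ℕ) : Prop :=
  ∃ f : ℕ → ℕ, Function.Injective f ∧ w₂ = w₁.map f

/-- One step: an isomorphism or a homotopy move H1, H2, H3. -/
inductive Move : List ℕ → List ℕ → Prop
  | iso {w₁ w₂ : List ℕ} : Isomorphic w₁ w₂ → Move w₁ w₂
  | h1 (x y : List ℕ) (A : ℕ) (hA : A ∉ x ++ y) :
      Move (x ++ [A, A] ++ y) (x ++ y)
  | h2 (x y z : List ℕ) (A B : ℕ) (hAB : A ≠ B)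
      (hA : A ∉ x ++ y ++ z) (hB : B ∉ x ++ y ++ z) :
      Move (x ++ [A, B] ++ y ++ [B, A] ++ z) (x ++ y ++ z)
  | h3 (x y z t : List ℕ) (A B C : ℕ)
      (hAB : A ≠ B) (hAC : A ≠ C) (hBC : B ≠ C)
      (hA : A ∉ x ++ y ++ z ++ t) (hB : B ∉ x ++ y ++ z ++ t)
      (hC : C ∉ x ++ y ++ z ++ t) :
      Move (x ++ [A, B] ++ y ++ [A, C] ++ z ++ [B, C] ++ t)
           (x ++ [B, A] ++ y ++ [C, A] ++ z ++ [C, B] ++ t)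

/-- Homotopy: the equivalence relation generated by isomorphisms and H1–H3. -/
def Homotopic : List ℕ → List ℕ → Prop := Relation.EqvGen Move

/-!
Four auxiliary letters `C, D, E, F` are inserted by inverse H2 moves, giving
`x C E F D A B D C y A B F E z`. An inverse H3 move on the letters `D, F, B` turns this into
`x C E D F A D B C y A F B E z`, where `A` now sits in the pattern `F A … A F` and is removed by
H2 together with `F`. What is left, `x C E D D B C y B E z`, collapses to `x y z` by H1 (`D`),
H2 (`E, B`) and H1 (`C`).
-/

theorem Move.homotopic {u v : List ℕ} (h : Move u v) : Homotopic u v :=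
  Relation.EqvGen.rel _ _ h

theorem Homotopic.symm {u v : List ℕ} (h : Homotopic u v) : Homotopic v u :=
  Relation.EqvGen.symm _ _ h

instance : Trans Homotopic Homotopic Homotopic := ⟨Relation.EqvGen.trans _ _ _⟩

theorem homotopic_h4_of_fresh {x y z : List ℕ} {A B C D E F : ℕ}
    (hnd : [A, B, C, D, E, F].Nodup) (hfresh : ∀ c ∈ [A, B, C, D, E, F], c ∉ x ++ y ++ z) :
    Homotopic (x ++ [A, B] ++ y ++ [A, B] ++ z) (x ++ y ++ z) := by
  simp only [List.nodup_cons, List.mem_cons, List.not_mem_nil, List.nodup_nil, not_or,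
    or_false] at hnd
  simp only [List.forall_mem_cons, List.mem_append, not_or, List.not_mem_nil,
    IsEmpty.forall_iff, forall_const, and_true] at hfresh
  calc Homotopic (x ++ [A, B] ++ y ++ [A, B] ++ z)
        (x ++ [C, D, A, B, D, C] ++ y ++ [A, B] ++ z) := by
        simpa using (Move.h2 x [A, B] (y ++ [A, B] ++ z) C D
          (by tauto) (by simp; tauto) (by simp; tauto)).homotopic.symm
    Homotopic _ (x ++ [C, E, F, D, A, B, D, C] ++ y ++ [A, B, F, E] ++ z) := by
        simpa using (Move.h2 (x ++ [C]) ([D, A, B, D, C] ++ y ++ [A, B]) z E F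
          (by tauto) (by simp; tauto) (by simp; tauto)).homotopic.symm
    Homotopic _ (x ++ [C, E, D, F, A, D, B, C] ++ y ++ [A, F, B, E] ++ z) := by
        simpa using (Move.h3 (x ++ [C, E]) [A] ([C] ++ y ++ [A]) ([E] ++ z) D F B
          (by tauto) (by tauto) (by tauto) (by simp; tauto) (by simp; tauto)
          (by simp; tauto)).homotopic.symm
    Homotopic _ (x ++ [C, E, D, D, B, C] ++ y ++ [B, E] ++ z) := by
        simpa using (Move.h2 (x ++ [C, E, D]) ([D, B, C] ++ y) ([B, E] ++ z) F A
          (by tauto) (by simp; tauto) (by simp; tauto)).homotopic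
    Homotopic _ (x ++ [C, E, B, C] ++ y ++ [B, E] ++ z) := by
        simpa using (Move.h1 (x ++ [C, E]) ([B, C] ++ y ++ [B, E] ++ z) D
          (by simp; tauto)).homotopic
    Homotopic _ (x ++ [C, C] ++ y ++ z) := by
        simpa using (Move.h2 (x ++ [C]) ([C] ++ y) z E B
          (by tauto) (by simp; tauto) (by simp; tauto)).homotopic
    Homotopic _ (x ++ y ++ z) := by
        simpa using (Move.h1 x (y ++ z) C (by simp; tauto)).homotopic

/-- H4 is derivable: xAByABz is homotopic to xyz. -/
theorem h4_derivable (x y z : List ℕ) (A B : ℕ) (hAB : A ≠ B)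
    (hA : A ∉ x ++ y ++ z) (hB : B ∉ x ++ y ++ z) :
    Homotopic (x ++ [A, B] ++ y ++ [A, B] ++ z) (x ++ y ++ z) := by
  obtain ⟨N, hN⟩ : ∃ N, ∀ a ∈ A :: B :: (x ++ y ++ z), a < N :=
    ⟨_, fun a ha => Nat.lt_succ_of_le (List.le_sum_of_mem ha)⟩
  have hAN : A < N := hN A (by simp)
  have hBN : B < N := hN B (by simp)
  have hfresh : ∀ n, N ≤ n → n ∉ x ++ y ++ z := fun n hn h =>
    (hN n (List.mem_cons_of_mem _ (List.mem_cons_of_mem _ h))).not_ge hn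
  refine homotopic_h4_of_fresh (C := N) (D := N + 1) (E := N + 2) (F := N + 3) ?_ ?_
  · simp only [List.nodup_cons, List.mem_cons, List.not_mem_nil, List.nodup_nil, or_false,
      not_false_eq_true, and_true]
    omega
  · simp only [List.forall_mem_cons, List.not_mem_nil, IsEmpty.forall_iff, forall_const,
      and_true]
    exact ⟨hA, hB, hfresh _ le_rfl, hfresh _ (by omega), hfresh _ (by omega),
      hfresh _ (by omega)⟩
end

section
/- The Gauss words ABACDCBD, ABCBDACD, and ABCDCADB are pairwise homotopic. -/
open Relation

/-- ABACDCBD, ABCBDACD and ABCDCADB are pairwise homotopic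
(letters A, B, C, D encoded as 0, 1, 2, 3). -/
theorem abacdcbd_class_pairwise_homotopic :
    Homotopic [0, 1, 0, 2, 3, 2, 1, 3] [0, 1, 2, 1, 3, 0, 2, 3] ∧
    Homotopic [0, 1, 2, 1, 3, 0, 2, 3] [0, 1, 2, 3, 2, 0, 3, 1] ∧
    Homotopic [0, 1, 0, 2, 3, 2, 1, 3] [0, 1, 2, 3, 2, 0, 3, 1] := by
  have s1 : Move [0,1,4,5,0,2,3,2,1,5,4,3] [0,1,0,2,3,2,1,3] :=
    Move.h2 [0,1] [0,2,3,2,1] [3] 4 5 (by decide) (by decide) (by decide)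
  have s2 : Move [6,7,0,1,4,5,0,2,3,2,1,5,7,6,4,3] [0,1,4,5,0,2,3,2,1,5,4,3] :=
    Move.h2 [] [0,1,4,5,0,2,3,2,1,5] [4,3] 6 7 (by decide) (by decide) (by decide)
  have s3 : Move [6,0,7,1,4,0,5,2,3,2,1,7,5,6,4,3] [6,7,0,1,4,5,0,2,3,2,1,5,7,6,4,3] :=
    Move.h3 [6] [1,4] [2,3,2,1] [6,4,3] 0 7 5 (by decide) (by decide) (by decide)
      (by decide) (by decide) (by decide)
  have s4 : Move [6,0,7,1,4,0,5,2,3,2,1,7,5,6,4,3] [6,0,4,0,5,2,3,2,5,6,4,3] :=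
    Move.h2 [6,0] [4,0,5,2,3,2] [5,6,4,3] 7 1 (by decide) (by decide) (by decide)
  have s5 : Move [6,0,4,0,5,2,3,2,5,6,4,3] [6,0,4,0,3,6,4,3] :=
    Move.h2 [6,0,4,0] [3] [6,4,3] 5 2 (by decide) (by decide) (by decide)
  have s6 : Move [6,0,4,0,3,6,4,3] [0,1,2,1,3,0,2,3] :=
    Move.iso ⟨((Equiv.swap 0 1).trans ((Equiv.swap 0 6).trans (Equiv.swap 2 4)) : Equiv.Perm ℕ),
      Equiv.injective _, by decide⟩
  have s7 : Move [0,1,2,1,3,0,2,3] [0,2,1,3,1,0,3,2] :=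
    Move.h3 [0] [] [0] [] 1 2 3 (by decide) (by decide) (by decide)
      (by decide) (by decide) (by decide)
  have s8 : Move [0,2,1,3,1,0,3,2] [0,1,2,3,2,0,3,1] :=
    Move.iso ⟨(Equiv.swap 1 2 : Equiv.Perm ℕ), Equiv.injective _, by decide⟩
  have h12 : Homotopic [0,1,0,2,3,2,1,3] [0,1,2,1,3,0,2,3] := by
    refine EqvGen.trans _ _ _ (EqvGen.symm _ _ (EqvGen.rel _ _ s1)) ?_
    refine EqvGen.trans _ _ _ (EqvGen.symm _ _ (EqvGen.rel _ _ s2)) ?_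
    refine EqvGen.trans _ _ _ (EqvGen.symm _ _ (EqvGen.rel _ _ s3)) ?_
    refine EqvGen.trans _ _ _ (EqvGen.rel _ _ s4) ?_
    exact EqvGen.trans _ _ _ (EqvGen.rel _ _ s5) (EqvGen.rel _ _ s6)
  have h23 : Homotopic [0,1,2,1,3,0,2,3] [0,1,2,3,2,0,3,1] :=
    EqvGen.trans _ _ _ (EqvGen.rel _ _ s7) (EqvGen.rel _ _ s8)
  exact ⟨h12, h23, EqvGen.trans _ _ _ h12 h23⟩
end

section
/- The Gauss words ABCACDBD, ABCADBDC, and ABCDBDAC are pairwise homotopic. -/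
namespace GaussAux

lemma hstep {a b : List ℕ} (h : Move a b) : Homotopic a b :=
  Relation.EqvGen.rel _ _ h

lemma hsymm {a b : List ℕ} (h : Homotopic a b) : Homotopic b a :=
  Relation.EqvGen.symm _ _ h

lemma htrans {a b c : List ℕ} (h₁ : Homotopic a b) (h₂ : Homotopic b c) :
    Homotopic a c := Relation.EqvGen.trans _ _ _ h₁ h₂

/-- The permutation swapping 1↔4 and 2↔6. -/
def f : ℕ → ℕ := fun n =>
  if n = 1 then 4 else if n = 4 then 1 else if n = 2 then 6 else if n = 6 then 2 else n

lemma f_invol : ∀ n, f (f n) = n := by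
  intro n
  unfold f
  split_ifs <;> simp_all

lemma f_inj : Function.Injective f :=
  Function.LeftInverse.injective f_invol

/-- The permutation swapping 0↔1. -/
def g : ℕ → ℕ := fun n => if n = 0 then 1 else if n = 1 then 0 else n

lemma g_invol : ∀ n, g (g n) = n := by
  intro n
  unfold g
  split_ifs <;> simp_all

lemma g_inj : Function.Injective g :=
  Function.LeftInverse.injective g_invol

lemma hom12 : Homotopic [0, 1, 2, 0, 2, 3, 1, 3] [0, 1, 2, 0, 3, 1, 3, 2] := by
  have s1 : Homotopic [0, 1, 2, 0, 2, 3, 1, 3] [0, 4, 5, 1, 2, 0, 2, 3, 5, 4, 1, 3] :=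
    hsymm (hstep (Move.h2 [0] [1, 2, 0, 2, 3] [1, 3] 4 5 (by decide) (by decide) (by decide)))
  have s2 : Homotopic [0, 4, 5, 1, 2, 0, 2, 3, 5, 4, 1, 3]
      [0, 4, 6, 7, 5, 1, 2, 0, 2, 3, 5, 4, 1, 3, 7, 6] :=
    hsymm (hstep (Move.h2 [0, 4] [5, 1, 2, 0, 2, 3, 5, 4, 1, 3] [] 6 7
      (by decide) (by decide) (by decide)))
  have s3 : Homotopic [0, 4, 6, 7, 5, 1, 2, 0, 2, 3, 5, 4, 1, 3, 7, 6]
      [0, 4, 6, 5, 7, 1, 2, 0, 2, 5, 3, 4, 1, 7, 3, 6] :=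
    hsymm (hstep (Move.h3 [0, 4, 6] [1, 2, 0, 2] [4, 1] [6] 5 7 3
      (by decide) (by decide) (by decide) (by decide) (by decide) (by decide)))
  have s4 : Homotopic [0, 4, 6, 5, 7, 1, 2, 0, 2, 5, 3, 4, 1, 7, 3, 6]
      [0, 4, 6, 5, 2, 0, 2, 5, 3, 4, 3, 6] :=
    hstep (Move.h2 [0, 4, 6, 5] [2, 0, 2, 5, 3, 4] [3, 6] 7 1
      (by decide) (by decide) (by decide))
  have s5 : Homotopic [0, 4, 6, 5, 2, 0, 2, 5, 3, 4, 3, 6] [0, 4, 6, 0, 3, 4, 3, 6] :=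
    hstep (Move.h2 [0, 4, 6] [0] [3, 4, 3, 6] 5 2 (by decide) (by decide) (by decide))
  have s6 : Homotopic [0, 4, 6, 0, 3, 4, 3, 6] [0, 1, 2, 0, 3, 1, 3, 2] :=
    hstep (Move.iso ⟨f, f_inj, by decide⟩)
  exact htrans s1 (htrans s2 (htrans s3 (htrans s4 (htrans s5 s6))))

lemma hom23 : Homotopic [0, 1, 2, 0, 3, 1, 3, 2] [0, 1, 2, 3, 1, 3, 0, 2] := by
  have s1 : Homotopic [0, 1, 2, 0, 3, 1, 3, 2] [1, 0, 2, 3, 0, 3, 1, 2] :=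
    hstep (Move.h3 [] [2] [] [2] 0 1 3
      (by decide) (by decide) (by decide) (by decide) (by decide) (by decide))
  have s2 : Homotopic [1, 0, 2, 3, 0, 3, 1, 2] [0, 1, 2, 3, 1, 3, 0, 2] :=
    hstep (Move.iso ⟨g, g_inj, by decide⟩)
  exact htrans s1 s2

end GaussAux

/-- ABCACDBD, ABCADBDC and ABCDBDAC are pairwise homotopic
(letters A, B, C, D encoded as 0, 1, 2, 3). -/
theorem abcacdbd_class_pairwise_homotopic :
    Homotopic [0, 1, 2, 0, 2, 3, 1, 3] [0, 1, 2, 0, 3, 1, 3, 2] ∧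
    Homotopic [0, 1, 2, 0, 3, 1, 3, 2] [0, 1, 2, 3, 1, 3, 0, 2] ∧
    Homotopic [0, 1, 2, 0, 2, 3, 1, 3] [0, 1, 2, 3, 1, 3, 0, 2] :=
  ⟨GaussAux.hom12, GaussAux.hom23, GaussAux.htrans GaussAux.hom12 GaussAux.hom23⟩
end

section
/- Let H_n be the abelian group generated by the isomorphism classes of nonempty Gauss words of rank at most n, modulo the relations G1: xAAy = 0, G2: xAByBAz + 2·xAyAz = 0 (where any term of rank greater than n is set to 0), and G3, G4 as in Polyak algebra. Then for every Gauss word w of rank m ≤ n, the element represented by w satisfies 2^{n−m+1}·w = 0 in H_n. -/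
open FreeAbelianGroup in
/-- Relators defining the truncated Polyak group `H n`: kill non-Gauss words,
the empty word and words of rank `> n` (G4), identify isomorphic words,
and impose G1, G2 and the eight-term relation G3. -/
def relators (n : ℕ) : Set (FreeAbelianGroup (List ℕ)) :=
  {r | (∃ w : List ℕ, ¬ IsGauss w ∧ r = of w) ∨
       (r = of ([] : List ℕ)) ∨
       -- G4: words of rank greater than n are 0
       (∃ w : List ℕ, n < rank w ∧ r = of w) ∨
       -- identification of isomorphic words
       (∃ w w' : List ℕ, Isomorphic w w' ∧ r = of w - of w') ∨
       -- G1: xAAy = 0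
       (∃ (x y : List ℕ) (A : ℕ), IsGauss (x ++ [A, A] ++ y) ∧
          r = of (x ++ [A, A] ++ y)) ∨
       -- G2: xAByBAz + 2·xAyAz = 0
       (∃ (x y z : List ℕ) (A B : ℕ), A ≠ B ∧
          IsGauss (x ++ [A, B] ++ y ++ [B, A] ++ z) ∧
          r = of (x ++ [A, B] ++ y ++ [B, A] ++ z) +
              2 • of (x ++ [A] ++ y ++ [A] ++ z)) ∨
       -- G3: eight-term relation
       (∃ (x y z t : List ℕ) (A B C : ℕ), A ≠ B ∧ A ≠ C ∧ B ≠ C ∧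
          IsGauss (x ++ [A, B] ++ y ++ [A, C] ++ z ++ [B, C] ++ t) ∧
          r = (of (x ++ [A, B] ++ y ++ [A, C] ++ z ++ [B, C] ++ t) +
               of (x ++ [A, B] ++ y ++ [A] ++ z ++ [B] ++ t) +
               of (x ++ [A] ++ y ++ [A, C] ++ z ++ [C] ++ t) +
               of (x ++ [B] ++ y ++ [C] ++ z ++ [B, C] ++ t)) -
              (of (x ++ [B, A] ++ y ++ [C, A] ++ z ++ [C, B] ++ t) +
               of (x ++ [B, A] ++ y ++ [A] ++ z ++ [B] ++ t) +
               of (x ++ [A] ++ y ++ [C, A] ++ z ++ [C] ++ t) +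
               of (x ++ [B] ++ y ++ [C] ++ z ++ [C, B] ++ t)))}

/-- The truncated Polyak group `H n`. -/
def H (n : ℕ) : Type :=
  FreeAbelianGroup (List ℕ) ⧸ AddSubgroup.closure (relators n)

instance (n : ℕ) : AddCommGroup (H n) :=
  QuotientAddGroup.Quotient.addCommGroup _

/-- The class of a Gauss word in `H n`. -/
def cls (n : ℕ) (w : List ℕ) : H n :=
  QuotientAddGroup.mk (FreeAbelianGroup.of w)

/-! Relation G2 with `x = []` says that `2 • (A y A z) = -(A B y B A z)` for a letter `B` not in
the word, and `A B y B A z` is again a Gauss word, of rank one higher. Each application of G2 thus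
trades one factor `2` for one unit of rank, and after `n - m + 1` steps the rank exceeds `n`,
where G4 makes the word vanish. -/

theorem IsGauss.perm {l₁ l₂ : List ℕ} (hp : l₁.Perm l₂) (h : IsGauss l₁) : IsGauss l₂ :=
  fun a ha => hp.count_eq a ▸ h a (hp.mem_iff.2 ha)

theorem rank_perm {l₁ l₂ : List ℕ} (hp : l₁.Perm l₂) : rank l₁ = rank l₂ :=
  hp.dedup.length_eq

theorem IsGauss.cons_cons {w : List ℕ} {B : ℕ} (hB : B ∉ w) (hw : IsGauss w) :
    IsGauss (B :: B :: w) := by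
  intro a ha
  rcases eq_or_ne a B with rfl | haB
  · simp [List.count_eq_zero.2 hB]
  · have haw : a ∈ w := by simpa [haB] using ha
    simpa [List.count_cons, haB.symm] using hw a haw

theorem rank_cons_cons {w : List ℕ} {B : ℕ} (hB : B ∉ w) :
    rank (B :: B :: w) = rank w + 1 := by
  simp [rank, List.dedup_cons_of_mem List.mem_cons_self, List.dedup_cons_of_notMem hB]

theorem IsGauss.exists_eq_append_cons {A : ℕ} {s : List ℕ} (h : IsGauss (A :: s)) :
    ∃ y z, s = y ++ A :: z := by
  have hcount : s.count A = 1 := by simpa [List.count_cons] using h A List.mem_cons_self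
  exact List.append_of_mem (List.count_pos_iff.1 (by omega))

section Relations

variable {n : ℕ}

theorem mk_eq_zero_of_mem_relators {r : FreeAbelianGroup (List ℕ)} (h : r ∈ relators n) :
    (QuotientAddGroup.mk r : H n) = 0 :=
  (QuotientAddGroup.eq_zero_iff r).2 (AddSubgroup.subset_closure h)

theorem cls_nil : cls n [] = 0 :=
  mk_eq_zero_of_mem_relators (Or.inr (Or.inl rfl))

theorem cls_eq_zero_of_lt_rank {w : List ℕ} (h : n < rank w) : cls n w = 0 :=
  mk_eq_zero_of_mem_relators (Or.inr (Or.inr (Or.inl ⟨w, h, rfl⟩)))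

theorem cls_G2 {x y z : List ℕ} {A B : ℕ} (hAB : A ≠ B)
    (hw : IsGauss (x ++ [A, B] ++ y ++ [B, A] ++ z)) :
    cls n (x ++ [A, B] ++ y ++ [B, A] ++ z) + 2 • cls n (x ++ [A] ++ y ++ [A] ++ z) = 0 := by
  have h := mk_eq_zero_of_mem_relators (n := n)
    (Or.inr (Or.inr (Or.inr (Or.inr (Or.inr (Or.inl ⟨x, y, z, A, B, hAB, hw, rfl⟩))))))
  rwa [QuotientAddGroup.mk_add, QuotientAddGroup.mk_nsmul] at h

end Relations

theorem exists_cls_add_two_smul_cls_eq_zero (n : ℕ) {w : List ℕ} (hw : IsGauss w)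
    (hne : w ≠ []) :
    ∃ w', IsGauss w' ∧ rank w' = rank w + 1 ∧ cls n w' + 2 • cls n w = 0 := by
  obtain ⟨A, s, rfl⟩ := List.exists_cons_of_ne_nil hne
  obtain ⟨y, z, rfl⟩ := hw.exists_eq_append_cons
  obtain ⟨B, hB⟩ := Infinite.exists_notMem_finset (A :: (y ++ A :: z)).toFinset
  rw [List.mem_toFinset] at hB
  have hAB : A ≠ B := by rintro rfl; exact hB List.mem_cons_self
  have hperm : (B :: B :: (A :: (y ++ A :: z))).Perm ([A, B] ++ y ++ [B, A] ++ z) := by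
    rw [List.perm_iff_count]
    intro a
    simp only [List.count_cons, List.count_append, List.count_nil]
    omega
  have hw' := (hw.cons_cons hB).perm hperm
  refine ⟨_, hw', (rank_perm hperm).symm.trans (rank_cons_cons hB), ?_⟩
  simpa using cls_G2 (n := n) (x := []) hAB hw'

theorem two_pow_sub_rank_smul_cls_eq_zero {n : ℕ} {w : List ℕ} (hw : IsGauss w) :
    2 ^ (n + 1 - rank w) • cls n w = 0 := by
  rcases lt_or_ge n (rank w) with hlt | hle
  · rw [cls_eq_zero_of_lt_rank hlt, smul_zero]
  rcases eq_or_ne w [] with rfl | hne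
  · rw [cls_nil, smul_zero]
  obtain ⟨w', hw', hrank, hrel⟩ := exists_cls_add_two_smul_cls_eq_zero n hw hne
  have ih := two_pow_sub_rank_smul_cls_eq_zero (n := n) hw'
  rw [eq_neg_of_add_eq_zero_left hrel, smul_neg, neg_eq_zero, smul_smul, ← pow_succ] at ih
  rwa [show n + 1 - rank w = n + 1 - rank w' + 1 by omega]
termination_by n + 1 - rank w

/-- For a Gauss word of rank m ≤ n, its class in H_n is killed by 2^(n-m+1). -/
theorem two_pow_smul_eq_zero (n m : ℕ) (w : List ℕ) (hw : IsGauss w)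
    (hm : rank w = m) (hmn : m ≤ n) :
    (2 ^ (n - m + 1)) • cls n w = 0 := by
  rw [show n - m + 1 = n + 1 - rank w by omega]
  exact two_pow_sub_rank_smul_cls_eq_zero hw
end

section
/- The Gauss word ABACDCBD is not homotopic to the empty word. -/
/-!
The invariant is the parity of the number of subsequences of a word that are isomorphic (have the
same `canon`) to one of `w₁, …, w₆`. Expanding this sum over the subsequences of both sides of a
move, according to which of the marked letters they keep, most terms vanish or cancel: the `wᵢ` are
Gauss words of length 8 without two equal adjacent letters, so a subsequence keeping one copy of a
letter, or both adjacent copies in `H1`, contributes nothing, and in `H2` the subsequences keeping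
only `A A` and only `B B` are isomorphic. What is left are identities for words with at most four
unmarked positions; relabelling the unmarked letters by their first occurrences leaves finitely many
cases, which are checked by evaluation.
-/

namespace GaussWord

section Canon

variable {α β : Type*} [DecidableEq α] [DecidableEq β]

def canon (l : List α) : List ℕ := l.map (l.idxOf ·)

theorem idxOf_map_of_injOn {f : α → β} {l : List α} (hf : Set.InjOn f {x | x ∈ l}) {a : α}
    (ha : a ∈ l) : (l.map f).idxOf (f a) = l.idxOf a := by
  induction l with
  | nil => simp at ha
  | cons b l ih =>
    by_cases hba : b = a
    · simp [hba]
    · have hfba : f b ≠ f a := fun h => hba (hf (by simp) (by simpa using ha) h)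
      rw [List.map_cons, List.idxOf_cons_ne _ hfba, List.idxOf_cons_ne _ hba,
        ih (hf.mono fun _ => List.mem_cons_of_mem b)
          ((List.mem_cons.mp ha).resolve_left (Ne.symm hba))]

theorem canon_map_of_injOn {f : α → β} {l : List α} (hf : Set.InjOn f {x | x ∈ l}) :
    canon (l.map f) = canon l := by
  simp only [canon, List.map_map]
  exact List.map_congr_left fun a ha => idxOf_map_of_injOn hf ha

theorem injOn_idxOf (l : List α) : Set.InjOn (l.idxOf ·) {x | x ∈ l} :=
  fun _ hx _ _ h => (List.idxOf_inj hx).mp h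

theorem canon_canon (l : List α) : canon (canon l) = canon l :=
  canon_map_of_injOn (injOn_idxOf l)

theorem length_canon (l : List α) : (canon l).length = l.length := List.length_map _

theorem lt_length_of_mem_canon {l : List α} {i : ℕ} (hi : i ∈ canon l) : i < l.length := by
  obtain ⟨a, ha, rfl⟩ := List.mem_map.mp hi
  exact List.idxOf_lt_length_iff.mpr ha

theorem isGauss_of_isGauss_canon {l : List ℕ} (h : IsGauss (canon l)) : IsGauss l := by
  intro a ha
  have := Multiset.count_map_eq_count _ (l : Multiset ℕ) (injOn_idxOf l) a ha
  rw [← h _ (List.mem_map_of_mem ha)]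
  simpa [canon] using this.symm

end Canon

theorem isChain_ne_of_map {α β : Type*} {f : α → β} {l : List α} (h : (l.map f).IsChain (· ≠ ·)) :
    l.IsChain (· ≠ ·) :=
  (List.isChain_map f).mp h |>.imp fun _ _ hab e => hab (congrArg f e)

section SublistSum

variable {α β M : Type*} [AddCommMonoid M]

def sublistSum (l : List α) (P : List α → M) : M := (l.sublists.map P).sum

@[simp] theorem sublistSum_nil (P : List α → M) : sublistSum [] P = P [] := by
  simp [sublistSum]

theorem sublistSum_cons (a : α) (l : List α) (P : List α → M) :
    sublistSum (a :: l) P = sublistSum l P + sublistSum l (fun s => P (a :: s)) := by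
  rw [sublistSum, List.sublists_cons, List.bind_eq_flatMap, List.map_flatMap, List.flatMap_def,
    List.sum_flatten, List.map_map]
  simp [Function.comp_def, List.sum_map_add, sublistSum]

theorem sublistSum_append (l₁ l₂ : List α) (P : List α → M) :
    sublistSum (l₁ ++ l₂) P = sublistSum l₁ (fun s => sublistSum l₂ (fun t => P (s ++ t))) := by
  induction l₁ generalizing P with
  | nil => simp
  | cons a l ih => simp only [List.cons_append, sublistSum_cons, ih]

theorem sublistSum_congr {l : List α} {P Q : List α → M} (h : ∀ s, s.Sublist l → P s = Q s) :
    sublistSum l P = sublistSum l Q :=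
  congrArg List.sum <| List.map_congr_left fun s hs => h s (List.mem_sublists.mp hs)

@[simp] theorem sublistSum_zero (l : List α) : sublistSum l (fun _ => (0 : M)) = 0 := by
  simp [sublistSum]

theorem sublistSum_add (l : List α) (P Q : List α → M) :
    sublistSum l (fun s => P s + Q s) = sublistSum l P + sublistSum l Q := List.sum_map_add

theorem sublistSum_map (f : α → β) (l : List α) (P : List β → M) :
    sublistSum (l.map f) P = sublistSum l (fun s => P (s.map f)) := by
  simp [sublistSum, List.sublists_map, Function.comp_def]

end SublistSum

/-- The words `w₁, …, w₆`, with `A, B, C, D` encoded as `0, 1, 2, 3`. -/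
def patterns : List (List ℕ) :=
  [[0, 1, 0, 2, 3, 2, 1, 3], [0, 1, 2, 0, 2, 3, 1, 3], [0, 1, 2, 0, 3, 1, 3, 2],
   [0, 1, 2, 1, 3, 0, 2, 3], [0, 1, 2, 3, 1, 3, 0, 2], [0, 1, 2, 3, 2, 0, 3, 1]]

def patternIndicator (s : List ℕ) : ZMod 2 := if canon s ∈ patterns.map canon then 1 else 0

def patternParity (p : List ℕ) : ZMod 2 := sublistSum p patternIndicator

theorem patternIndicator_map_of_injOn {f : ℕ → ℕ} {s : List ℕ} (hf : Set.InjOn f {x | x ∈ s}) :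
    patternIndicator (s.map f) = patternIndicator s := by
  rw [patternIndicator, canon_map_of_injOn hf, patternIndicator]

theorem canon_mem_of_patternIndicator_ne_zero {s : List ℕ} (h : patternIndicator s ≠ 0) :
    canon s ∈ patterns.map canon := by
  by_contra hs
  exact h (if_neg hs)

theorem patternIndicator_eq_zero_of_length_ne {s : List ℕ} (h : s.length ≠ 8) :
    patternIndicator s = 0 := by
  by_contra hs
  have hlen : ∀ w ∈ patterns.map canon, w.length = 8 := by decide
  exact h (length_canon s ▸ hlen _ (canon_mem_of_patternIndicator_ne_zero hs))

theorem patternIndicator_eq_zero_of_count_eq_one {s : List ℕ} {a : ℕ} (h : s.count a = 1) :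
    patternIndicator s = 0 := by
  by_contra hs
  have hGauss : ∀ w ∈ patterns.map canon, IsGauss w := by unfold IsGauss; decide
  have := isGauss_of_isGauss_canon (hGauss _ (canon_mem_of_patternIndicator_ne_zero hs)) a
    (List.count_pos_iff.mp (by omega))
  omega

theorem patternIndicator_append_cons_cons_self (u v : List ℕ) (a : ℕ) :
    patternIndicator (u ++ a :: a :: v) = 0 := by
  by_contra hs
  have hChain : ∀ w ∈ patterns.map canon, w.IsChain (· ≠ ·) := by decide
  have := isChain_ne_of_map (hChain _ (canon_mem_of_patternIndicator_ne_zero hs))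
  simp at this

theorem patternParity_map_of_injective {f : ℕ → ℕ} (hf : Function.Injective f) (p : List ℕ) :
    patternParity (p.map f) = patternParity p := by
  rw [patternParity, sublistSum_map]
  exact sublistSum_congr fun s _ => patternIndicator_map_of_injOn hf.injOn

theorem patternParity_h1 (x y : List ℕ) (A : ℕ) :
    patternParity (x ++ [A, A] ++ y) = patternParity (x ++ y) := by
  simp only [patternParity, List.append_assoc, sublistSum_append, sublistSum_cons,
    List.nil_append, List.cons_append, patternIndicator_append_cons_cons_self]
  refine sublistSum_congr fun s _ => ?_
  rw [sublistSum_zero, add_zero, add_assoc, CharTwo.add_self_eq_zero, add_zero]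

theorem mem_sections_replicate {α : Type*} {L w : List α} {n : ℕ} :
    w ∈ (List.replicate n L).sections ↔ w.length = n ∧ ∀ x ∈ w, x ∈ L := by
  induction n generalizing w with
  | zero => simp +contextual
  | succ n ih =>
    rcases w with _ | ⟨a, w⟩
    · simp [List.replicate_succ, List.mem_sections]
    · simp [List.replicate_succ, ih, and_left_comm]

def canonicalWords (n : ℕ) : List (List ℕ) :=
  (List.replicate n (List.range n)).sections.filter fun w => canon w = w

theorem canon_mem_canonicalWords (c : List ℕ) : canon c ∈ canonicalWords c.length := by
  simp only [canonicalWords, List.mem_filter, mem_sections_replicate, List.mem_range,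
    length_canon, canon_canon, decide_true, and_true, true_and]
  exact fun _ => lt_length_of_mem_canon

def relabel (k : ℕ) (m c : List ℕ) (v : ℕ) : ℕ := if v ∈ m then k + m.idxOf v else c.idxOf v

theorem injOn_relabel {k : ℕ} {m c : List ℕ} (hc : c.length ≤ k) :
    Set.InjOn (relabel k m c) {x | x ∈ m ++ c} := by
  have hlt : ∀ {x}, x ∈ c → c.idxOf x < k := fun hx => (List.idxOf_lt_length_iff.mpr hx).trans_le hc
  intro x (hx : x ∈ m ++ c) y (hy : y ∈ m ++ c) hxy
  rw [List.mem_append] at hx hy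
  unfold relabel at hxy
  by_cases hxm : x ∈ m <;> by_cases hym : y ∈ m <;> simp only [hxm, hym, if_true, if_false] at hxy
  · exact (List.idxOf_inj hxm).mp (by omega)
  · have := hlt (hy.resolve_left hym); omega
  · have := hlt (hx.resolve_left hxm); omega
  · exact (List.idxOf_inj (hx.resolve_left hxm)).mp hxy

theorem patternIndicator_eq_of_map_relabel {k : ℕ} {m c u v : List ℕ} (hc : c.length ≤ k)
    (hu : ∀ x ∈ u, x ∈ m ++ c) (huv : u.map (relabel k m c) = v) :
    patternIndicator u = patternIndicator v :=
  huv ▸ (patternIndicator_map_of_injOn ((injOn_relabel hc).mono hu)).symm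

theorem map_relabel_mem_canonicalWords {k : ℕ} {m c : List ℕ} (h : m.Disjoint c) :
    c.map (relabel k m c) ∈ canonicalWords c.length := by
  have hcanon : c.map (relabel k m c) = canon c :=
    List.map_congr_left fun _ hx => if_neg fun hm => h hm hx
  exact hcanon ▸ canon_mem_canonicalWords c

theorem patternIndicator_abba_eq_zero {A B : ℕ} (hAB : A ≠ B) {s₁ s₂ s₃ : List ℕ}
    (hA : A ∉ s₁ ++ s₂ ++ s₃) (hB : B ∉ s₁ ++ s₂ ++ s₃) :
    patternIndicator (s₁ ++ A :: B :: (s₂ ++ B :: A :: s₃)) = 0 := by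
  by_cases hn : (s₁ ++ (s₂ ++ s₃)).length = 4
  swap
  · exact patternIndicator_eq_zero_of_length_ne (by simp at hn ⊢; omega)
  have key : ∀ w ∈ canonicalWords 4, ∀ p ∈ w.inits.zip w.tails, ∀ q ∈ p.2.inits.zip p.2.tails,
      patternIndicator (p.1 ++ 4 :: 5 :: (q.1 ++ 5 :: 4 :: q.2)) = 0 := by
    decide +kernel
  simp only [List.mem_append, not_or] at hA hB
  have hw := hn ▸ map_relabel_mem_canonicalWords (k := 4) (m := [A, B])
    (c := s₁ ++ (s₂ ++ s₃)) (by simp [hA, hB])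
  simp only [List.map_append] at hw
  refine .trans ?_
    (key _ hw _ (List.mem_zip_inits_tails.mpr rfl) _ (List.mem_zip_inits_tails.mpr rfl))
  exact patternIndicator_eq_of_map_relabel (k := 4) (m := [A, B]) (c := s₁ ++ (s₂ ++ s₃)) hn.le
    (by simp +contextual [or_imp]) (by simp [relabel, hAB, hAB.symm])

theorem patternIndicator_abacbc_eq_bacacb {A B C : ℕ} (hAB : A ≠ B) (hAC : A ≠ C) (hBC : B ≠ C)
    {s₁ s₂ s₃ s₄ : List ℕ} (hA : A ∉ s₁ ++ s₂ ++ s₃ ++ s₄) (hB : B ∉ s₁ ++ s₂ ++ s₃ ++ s₄)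
    (hC : C ∉ s₁ ++ s₂ ++ s₃ ++ s₄) :
    patternIndicator (s₁ ++ A :: B :: (s₂ ++ A :: C :: (s₃ ++ B :: C :: s₄))) =
      patternIndicator (s₁ ++ B :: A :: (s₂ ++ C :: A :: (s₃ ++ C :: B :: s₄))) := by
  by_cases hn : (s₁ ++ (s₂ ++ (s₃ ++ s₄))).length = 2
  swap
  · simp only [List.length_append] at hn
    rw [patternIndicator_eq_zero_of_length_ne (by simp; omega),
      patternIndicator_eq_zero_of_length_ne (by simp; omega)]
  have key : ∀ w ∈ canonicalWords 2, ∀ p ∈ w.inits.zip w.tails, ∀ q ∈ p.2.inits.zip p.2.tails,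
      ∀ r ∈ q.2.inits.zip q.2.tails,
        patternIndicator (p.1 ++ 4 :: 5 :: (q.1 ++ 4 :: 6 :: (r.1 ++ 5 :: 6 :: r.2))) =
          patternIndicator (p.1 ++ 5 :: 4 :: (q.1 ++ 6 :: 4 :: (r.1 ++ 6 :: 5 :: r.2))) := by
    decide +kernel
  simp only [List.mem_append, not_or] at hA hB hC
  have hw := hn ▸ map_relabel_mem_canonicalWords (k := 4) (m := [A, B, C])
    (c := s₁ ++ (s₂ ++ (s₃ ++ s₄))) (by simp [hA, hB, hC])
  simp only [List.map_append] at hw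
  refine .trans ?_ ((key _ hw _ (List.mem_zip_inits_tails.mpr rfl) _
    (List.mem_zip_inits_tails.mpr rfl) _ (List.mem_zip_inits_tails.mpr rfl)).trans (.symm ?_))
  all_goals
    exact patternIndicator_eq_of_map_relabel (k := 4) (m := [A, B, C])
      (c := s₁ ++ (s₂ ++ (s₃ ++ s₄))) (by omega) (by simp +contextual [or_imp])
      (by simp [relabel, hAB, hAC, hBC, hAB.symm, hAC.symm, hBC.symm])

theorem sum_patternIndicator_h3_pairs_eq {A B C : ℕ} (hAB : A ≠ B) (hAC : A ≠ C) (hBC : B ≠ C)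
    {s₁ s₂ s₃ s₄ : List ℕ} (hA : A ∉ s₁ ++ s₂ ++ s₃ ++ s₄) (hB : B ∉ s₁ ++ s₂ ++ s₃ ++ s₄)
    (hC : C ∉ s₁ ++ s₂ ++ s₃ ++ s₄) :
    patternIndicator (s₁ ++ A :: B :: (s₂ ++ A :: (s₃ ++ B :: s₄)))
      + patternIndicator (s₁ ++ A :: (s₂ ++ A :: C :: (s₃ ++ C :: s₄)))
      + patternIndicator (s₁ ++ B :: (s₂ ++ C :: (s₃ ++ B :: C :: s₄)))
    = patternIndicator (s₁ ++ B :: A :: (s₂ ++ A :: (s₃ ++ B :: s₄)))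
      + patternIndicator (s₁ ++ A :: (s₂ ++ C :: A :: (s₃ ++ C :: s₄)))
      + patternIndicator (s₁ ++ B :: (s₂ ++ C :: (s₃ ++ C :: B :: s₄))) := by
  by_cases hn : (s₁ ++ (s₂ ++ (s₃ ++ s₄))).length = 4
  swap
  · simp only [List.length_append] at hn
    simp (disch := simp; omega) only [patternIndicator_eq_zero_of_length_ne]
  have key : ∀ w ∈ canonicalWords 4, ∀ p ∈ w.inits.zip w.tails, ∀ q ∈ p.2.inits.zip p.2.tails,
      ∀ r ∈ q.2.inits.zip q.2.tails,
        patternIndicator (p.1 ++ 4 :: 5 :: (q.1 ++ 4 :: (r.1 ++ 5 :: r.2)))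
          + patternIndicator (p.1 ++ 4 :: (q.1 ++ 4 :: 6 :: (r.1 ++ 6 :: r.2)))
          + patternIndicator (p.1 ++ 5 :: (q.1 ++ 6 :: (r.1 ++ 5 :: 6 :: r.2)))
        = patternIndicator (p.1 ++ 5 :: 4 :: (q.1 ++ 4 :: (r.1 ++ 5 :: r.2)))
          + patternIndicator (p.1 ++ 4 :: (q.1 ++ 6 :: 4 :: (r.1 ++ 6 :: r.2)))
          + patternIndicator (p.1 ++ 5 :: (q.1 ++ 6 :: (r.1 ++ 6 :: 5 :: r.2))) := by
    decide +kernel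
  simp only [List.mem_append, not_or] at hA hB hC
  have hw := hn ▸ map_relabel_mem_canonicalWords (k := 4) (m := [A, B, C])
    (c := s₁ ++ (s₂ ++ (s₃ ++ s₄))) (by simp [hA, hB, hC])
  simp only [List.map_append] at hw
  refine (congrArg₂ (· + ·) (congrArg₂ (· + ·) ?_ ?_) ?_).trans
    ((key _ hw _ (List.mem_zip_inits_tails.mpr rfl) _ (List.mem_zip_inits_tails.mpr rfl) _
      (List.mem_zip_inits_tails.mpr rfl)).trans
    (congrArg₂ (· + ·) (congrArg₂ (· + ·) ?_ ?_) ?_).symm)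
  all_goals
    exact patternIndicator_eq_of_map_relabel (k := 4) (m := [A, B, C])
      (c := s₁ ++ (s₂ ++ (s₃ ++ s₄))) hn.le (by simp +contextual [or_imp])
      (by simp [relabel, hAB, hAC, hBC, hAB.symm, hAC.symm, hBC.symm])

theorem map_swap_of_not_mem {α : Type*} [DecidableEq α] {a b : α} {s : List α} (ha : a ∉ s)
    (hb : b ∉ s) : s.map (Equiv.swap a b) = s :=
  (List.map_congr_left fun _ hx =>
    Equiv.swap_apply_of_ne_of_ne (ne_of_mem_of_not_mem hx ha) (ne_of_mem_of_not_mem hx hb)).trans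
    s.map_id

theorem patternParity_h2 (x y z : List ℕ) (A B : ℕ) (hAB : A ≠ B)
    (hA : A ∉ x ++ y ++ z) (hB : B ∉ x ++ y ++ z) :
    patternParity (x ++ [A, B] ++ y ++ [B, A] ++ z) = patternParity (x ++ y ++ z) := by
  simp only [patternParity, List.append_assoc, sublistSum_append, sublistSum_cons, ← sublistSum_add,
    List.nil_append, List.cons_append]
  refine sublistSum_congr fun s₁ h₁ => sublistSum_congr fun s₂ h₂ =>
    sublistSum_congr fun s₃ h₃ => ?_
  have hsub := ((h₁.append h₂).append h₃).subset
  replace hA := mt (@hsub A) hA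
  replace hB := mt (@hsub B) hB
  rw [patternIndicator_abba_eq_zero hAB hA hB]
  simp only [List.mem_append, not_or] at hA hB
  -- the terms keeping a single copy of `A` or of `B` vanish
  have kA := fun s => @patternIndicator_eq_zero_of_count_eq_one s A
  have kB := fun s => @patternIndicator_eq_zero_of_count_eq_one s B
  simp (disch := simp [List.count_cons, List.count_eq_zero_of_not_mem, *, Ne.symm hAB])
    only [kA, kB, add_zero, zero_add]
  have hswap : (s₁ ++ A :: (s₂ ++ A :: s₃)).map (Equiv.swap A B) = s₁ ++ B :: (s₂ ++ B :: s₃) := by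
    simp [map_swap_of_not_mem, *]
  rw [← hswap, patternIndicator_map_of_injOn (Equiv.swap A B).injective.injOn]
  linear_combination CharTwo.add_self_eq_zero (patternIndicator (s₁ ++ A :: (s₂ ++ A :: s₃)))

theorem patternParity_h3 (x y z t : List ℕ) (A B C : ℕ) (hAB : A ≠ B) (hAC : A ≠ C)
    (hBC : B ≠ C) (hA : A ∉ x ++ y ++ z ++ t) (hB : B ∉ x ++ y ++ z ++ t)
    (hC : C ∉ x ++ y ++ z ++ t) :
    patternParity (x ++ [A, B] ++ y ++ [A, C] ++ z ++ [B, C] ++ t) =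
      patternParity (x ++ [B, A] ++ y ++ [C, A] ++ z ++ [C, B] ++ t) := by
  simp only [patternParity, List.append_assoc, sublistSum_append, sublistSum_cons, ← sublistSum_add,
    List.nil_append, List.cons_append]
  refine sublistSum_congr fun s₁ h₁ => sublistSum_congr fun s₂ h₂ =>
    sublistSum_congr fun s₃ h₃ => sublistSum_congr fun s₄ h₄ => ?_
  have hsub := (((h₁.append h₂).append h₃).append h₄).subset
  replace hA := mt (@hsub A) hA
  replace hB := mt (@hsub B) hB
  replace hC := mt (@hsub C) hC
  have hpairs := sum_patternIndicator_h3_pairs_eq hAB hAC hBC hA hB hC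
  have hall := patternIndicator_abacbc_eq_bacacb hAB hAC hBC hA hB hC
  simp only [List.mem_append, not_or] at hA hB hC
  have kA := fun s => @patternIndicator_eq_zero_of_count_eq_one s A
  have kB := fun s => @patternIndicator_eq_zero_of_count_eq_one s B
  have kC := fun s => @patternIndicator_eq_zero_of_count_eq_one s C
  simp (disch := simp [List.count_cons, List.count_eq_zero_of_not_mem, *, Ne.symm hAB,
      Ne.symm hAC, Ne.symm hBC])
    only [kA, kB, kC, add_zero, zero_add]
  linear_combination hpairs + hall

theorem patternParity_eq_of_move {p q : List ℕ} (h : Move p q) :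
    patternParity p = patternParity q := by
  cases h with
  | iso h =>
    obtain ⟨f, hf, rfl⟩ := h
    exact (patternParity_map_of_injective hf _).symm
  | h1 x y A => exact patternParity_h1 x y A
  | h2 x y z A B hAB hA hB => exact patternParity_h2 x y z A B hAB hA hB
  | h3 x y z t A B C hAB hAC hBC hA hB hC =>
    exact patternParity_h3 x y z t A B C hAB hAC hBC hA hB hC

theorem patternParity_eq_of_homotopic {p q : List ℕ} (h : Homotopic p q) :
    patternParity p = patternParity q :=
  Relation.EqvGen.rec (fun _ _ => patternParity_eq_of_move) (fun _ => rfl)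
    (fun _ _ _ ih => ih.symm) (fun _ _ _ _ _ ih₁ ih₂ => ih₁.trans ih₂) h

end GaussWord

/-- ABACDCBD (encoded with A,B,C,D as 0,1,2,3) is not homotopic to the
empty word. -/
theorem abacdcbd_not_null_homotopic :
    ¬ Homotopic [0, 1, 0, 2, 3, 2, 1, 3] [] := by
  intro h
  have h₁ : GaussWord.patternParity [0, 1, 0, 2, 3, 2, 1, 3] = 1 := by decide +kernel
  have h₀ : GaussWord.patternParity [] = 0 := by decide
  have := GaussWord.patternParity_eq_of_homotopic h
  rw [h₁, h₀] at this
  exact one_ne_zero this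
end

section
/- The Gauss word ABACDCBD is not homotopic to the Gauss word ABACBDCD. -/
/-!
`f(p) = Σᵢ ⟨wᵢ, p⟩ mod 2` is a sum, over the subsequences of `p`, of a weight that depends only
on the isomorphism class of the subsequence, so it is invariant under isomorphisms. For a move,
split each subsequence into its part outside the moved letters and its choice among the moved
letters, and compare both sides for a fixed outside part. The `wᵢ` are Gauss words of length 8,
so a choice taking a single occurrence of a moved letter has weight 0. For H1 the two choices `A`
coincide and `AA` has weight 0, as no `wᵢ` repeats a letter adjacently. For H2 the choices `AA`
and `BB` have equal weight and `ABBA` has weight 0. For H3 the choices that differ between the two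
sides satisfy a four-term identity. After relabelling the outside part into normal form, the last
two facts become finite checks. Finally `f(ABACDCBD) = 1` and `f(ABACBDCD) = 0`.
-/

open scoped List

section SublistSum

variable {α M : Type*} [AddCommMonoid M]

def sublistSum (l : List α) (F : List α → M) : M := (l.sublists.map F).sum

theorem sublistSum_congr {l : List α} {F G : List α → M} (h : ∀ s, s <+ l → F s = G s) :
    sublistSum l F = sublistSum l G :=
  congrArg List.sum (List.map_congr_left fun s hs => h s (List.mem_sublists.1 hs))

theorem sublistSum_comm (l₁ l₂ : List α) (F : List α → List α → M) :
    (sublistSum l₁ fun s => sublistSum l₂ (F s)) =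
      sublistSum l₂ fun t => sublistSum l₁ fun s => F s t := by
  simpa [sublistSum] using
    Multiset.sum_map_sum_map (l₁.sublists : Multiset (List α)) l₂.sublists (f := F)

theorem sublistSum_append (l₁ l₂ : List α) (F : List α → M) :
    sublistSum (l₁ ++ l₂) F = sublistSum l₁ fun s => sublistSum l₂ fun t => F (s ++ t) := by
  rw [sublistSum_comm]
  simp [sublistSum, List.sublists_append, List.flatMap, List.sum_flatten, List.map_flatten,
    Function.comp_def]

theorem sublistSum_pair (a b : α) (F : List α → M) :
    sublistSum [a, b] F = F [] + F [a] + F [b] + F [a, b] := by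
  simp [sublistSum, List.sublists, add_assoc]

theorem sublistSum_map {β : Type*} (f : α → β) (l : List α) (F : List β → M) :
    sublistSum (l.map f) F = sublistSum l fun s => F (s.map f) := by
  simp [sublistSum, List.sublists_map, Function.comp_def]

end SublistSum

section NormalForm

variable {α β : Type*}

def wordsOfLength (alphabet : List α) : ℕ → List (List α)
  | 0 => [[]]
  | n + 1 => alphabet.flatMap fun a => (wordsOfLength alphabet n).map (a :: ·)

theorem mem_wordsOfLength {alphabet w : List α} (h : w ⊆ alphabet) :
    w ∈ wordsOfLength alphabet w.length := by
  induction w with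
  | nil => simp [wordsOfLength]
  | cons a w ih =>
    simp only [List.cons_subset] at h
    exact List.mem_flatMap.2 ⟨a, h.1, List.mem_map_of_mem (ih h.2)⟩

variable [DecidableEq α] [DecidableEq β]

theorem idxOf_map_of_injOn {f : α → β} {u : List α} (hf : Set.InjOn f {a | a ∈ u}) {a : α}
    (ha : a ∈ u) : (u.map f).idxOf (f a) = u.idxOf a := by
  induction u with
  | nil => simp at ha
  | cons b u ih =>
    by_cases hba : b = a
    · simp [hba]
    · have hf' : f b ≠ f a := fun h => hba (hf (List.mem_cons_self ..) ha h)
      rw [List.map_cons, List.idxOf_cons_ne _ hf', List.idxOf_cons_ne _ hba,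
        ih (hf.mono fun x hx => List.mem_cons_of_mem b hx)
          ((List.mem_cons.1 ha).resolve_left (Ne.symm hba))]

theorem injOn_idxOf (τ : List α) : Set.InjOn τ.idxOf {a | a ∈ τ} :=
  fun _ ha _ _ h => (List.idxOf_inj ha).1 h

theorem count_map_of_injOn {f : α → β} {u : List α} (hf : Set.InjOn f {a | a ∈ u}) {a : α}
    (ha : a ∈ u) : (u.map f).count (f a) = u.count a := by
  simp only [List.count, List.countP_map]
  exact List.countP_congr fun b hb => by simp [hf.eq_iff hb ha]

theorem map_idxOf_append_of_subset {s σ : List α} (L : List α) (h : s ⊆ σ) :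
    s.map (σ ++ L).idxOf = s.map σ.idxOf :=
  List.map_congr_left fun _ ha => List.idxOf_append_of_mem (h ha)

/-- Each letter is replaced by the position of its first occurrence: two words are isomorphic
exactly when they have the same normal form. -/
def normalForm (u : List α) : List ℕ := u.map u.idxOf

theorem normalForm_map_of_injOn {f : α → β} {u : List α} (hf : Set.InjOn f {a | a ∈ u}) :
    normalForm (u.map f) = normalForm u := by
  simp only [normalForm, List.map_map]
  exact List.map_congr_left fun a ha => idxOf_map_of_injOn hf ha

theorem normalForm_normalForm (u : List α) : normalForm (normalForm u) = normalForm u :=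
  normalForm_map_of_injOn (injOn_idxOf u)

def normalWords (n : ℕ) : List (List ℕ) :=
  (wordsOfLength (List.range n) n).filter fun w => normalForm w = w

theorem normalForm_mem_normalWords (u : List α) : normalForm u ∈ normalWords u.length := by
  have hlen : (normalForm u).length = u.length := List.length_map _
  have hsub : normalForm u ⊆ List.range u.length := by
    intro b hb
    obtain ⟨a, ha, rfl⟩ := List.mem_map.1 hb
    exact List.mem_range.2 (List.idxOf_lt_length_of_mem ha)
  rw [normalWords, List.mem_filter, normalForm_normalForm, ← hlen]
  exact ⟨mem_wordsOfLength (hlen ▸ hsub), decide_eq_true rfl⟩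

end NormalForm

theorem isGauss_map_of_injOn {f : ℕ → ℕ} {u : List ℕ} (hf : Set.InjOn f {a | a ∈ u}) :
    IsGauss (u.map f) ↔ IsGauss u := by
  simp only [IsGauss, List.forall_mem_map]
  exact forall₂_congr fun a ha => by rw [count_map_of_injOn hf ha]

/-- The words `w₁, …, w₆` (A, B, C, D encoded as 0, 1, 2, 3). -/
def targetWords : List (List ℕ) :=
  [[0, 1, 0, 2, 3, 2, 1, 3], [0, 1, 2, 0, 2, 3, 1, 3], [0, 1, 2, 0, 3, 1, 3, 2],
    [0, 1, 2, 1, 3, 0, 2, 3], [0, 1, 2, 3, 1, 3, 0, 2], [0, 1, 2, 3, 2, 0, 3, 1]]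

def weight (u : List ℕ) : ZMod 2 := if normalForm u ∈ targetWords.map normalForm then 1 else 0

/-- `List.sublists` lists the subsequences of `p` by position, with repetitions, so this is
`f(p) = Σᵢ ⟨wᵢ, p⟩ mod 2`. -/
def invariant (p : List ℕ) : ZMod 2 := sublistSum p weight

theorem weight_ne_zero_iff {u : List ℕ} :
    weight u ≠ 0 ↔ normalForm u ∈ targetWords.map normalForm := by
  unfold weight
  split_ifs with h <;> simp [h]

theorem weight_map_of_injOn {f : ℕ → ℕ} {u : List ℕ} (hf : Set.InjOn f {a | a ∈ u}) :
    weight (u.map f) = weight u := by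
  simp only [weight, normalForm_map_of_injOn hf]

theorem weight_map_idxOf {u τ : List ℕ} (h : ∀ a ∈ u, a ∈ τ) :
    weight (u.map τ.idxOf) = weight u :=
  weight_map_of_injOn ((injOn_idxOf τ).mono fun a ha => h a ha)

theorem isGauss_of_weight_ne_zero {u : List ℕ} (h : weight u ≠ 0) : IsGauss u := by
  have hGauss : ∀ w ∈ targetWords.map normalForm, ∀ a ∈ w, w.count a = 2 := by decide
  exact (isGauss_map_of_injOn (injOn_idxOf u)).1 (hGauss _ (weight_ne_zero_iff.1 h))

theorem weight_eq_zero_of_count_eq_one {u : List ℕ} (a : ℕ) (h : u.count a = 1) :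
    weight u = 0 := by
  by_contra hw
  have := isGauss_of_weight_ne_zero hw a (List.count_pos_iff.1 (by omega))
  omega

theorem weight_eq_zero_of_length_ne {u : List ℕ} (h : u.length ≠ 8) : weight u = 0 := by
  by_contra hw
  have hlen : ∀ w ∈ targetWords.map normalForm, w.length = 8 := by decide
  exact h (by simpa [normalForm] using hlen _ (weight_ne_zero_iff.1 hw))

theorem weight_append_cons_cons_self (s t : List ℕ) (a : ℕ) : weight (s ++ a :: a :: t) = 0 := by
  by_contra hw
  have hchain : ∀ w ∈ targetWords.map normalForm, w.IsChain (· ≠ ·) := by decide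
  set g := (s ++ a :: a :: t).idxOf
  have hinfix : [g a, g a] <:+: normalForm (s ++ a :: a :: t) :=
    ⟨s.map g, t.map g, by simp [normalForm, g]⟩
  simpa using (hchain _ (weight_ne_zero_iff.1 hw)).infix hinfix

theorem weight_replace_fresh_letter {A B : ℕ} {s₀ s₁ s₂ : List ℕ} (hA : A ∉ s₀ ++ s₁ ++ s₂)
    (hB : B ∉ s₀ ++ s₁ ++ s₂) :
    weight (s₀ ++ B :: (s₁ ++ B :: s₂)) = weight (s₀ ++ A :: (s₁ ++ A :: s₂)) := by
  have hfix : ∀ s : List ℕ, A ∉ s → B ∉ s → s.map (Equiv.swap A B) = s := fun s hAs hBs =>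
    (List.map_congr_left (g := id) fun _ ha => Equiv.swap_apply_of_ne_of_ne
      (ne_of_mem_of_not_mem ha hAs) (ne_of_mem_of_not_mem ha hBs)).trans (List.map_id s)
  simp only [List.mem_append, not_or] at hA hB
  rw [← weight_map_of_injOn (Equiv.swap A B).injective.injOn]
  simp [hfix, hA, hB]

theorem weight_h2_pattern_of_normal : ∀ σ ∈ normalWords 4, ∀ p ∈ σ.inits.zip σ.tails,
    ∀ q ∈ p.2.inits.zip p.2.tails, weight (p.1 ++ 4 :: 5 :: (q.1 ++ 5 :: 4 :: q.2)) = 0 := by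
  decide +kernel

theorem weight_h2_pattern_eq_zero {A B : ℕ} {s₀ s₁ s₂ : List ℕ} (hAB : A ≠ B)
    (hA : A ∉ s₀ ++ s₁ ++ s₂) (hB : B ∉ s₀ ++ s₁ ++ s₂) :
    weight (s₀ ++ A :: B :: (s₁ ++ B :: A :: s₂)) = 0 := by
  set σ := s₀ ++ s₁ ++ s₂
  by_cases hn : σ.length = 4
  swap
  · exact weight_eq_zero_of_length_ne (by simp [σ] at hn ⊢; omega)
  have hsub : ∀ a ∈ s₀ ++ A :: B :: (s₁ ++ B :: A :: s₂), a ∈ σ ++ [A, B] := by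
    simp +contextual [σ, or_imp]
  rw [← weight_map_idxOf hsub]
  simp only [List.map_append, List.map_cons, List.idxOf_append_of_notMem hA,
    List.idxOf_append_of_notMem hB, hn,
    map_idxOf_append_of_subset _ (fun _ h => by simp [σ, h] : s₀ ⊆ σ),
    map_idxOf_append_of_subset _ (fun _ h => by simp [σ, h] : s₁ ⊆ σ),
    map_idxOf_append_of_subset _ (fun _ h => by simp [σ, h] : s₂ ⊆ σ)]
  have hnormal := normalForm_mem_normalWords σ
  have hsplit : ∀ f : ℕ → ℕ, σ.map f = s₀.map f ++ (s₁.map f ++ s₂.map f) := fun f => by simp [σ]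
  rw [hn, normalForm, hsplit] at hnormal
  simpa [hAB] using weight_h2_pattern_of_normal _ hnormal _
    (List.mem_zip_inits_tails.2 rfl) _ (List.mem_zip_inits_tails.2 rfl)

theorem weight_h3_identity_of_normal : ∀ n ∈ [2, 4], ∀ σ ∈ normalWords n,
    ∀ p ∈ σ.inits.zip σ.tails, ∀ q ∈ p.2.inits.zip p.2.tails, ∀ r ∈ q.2.inits.zip q.2.tails,
    weight (p.1 ++ n :: (n + 1) :: (q.1 ++ n :: (r.1 ++ (n + 1) :: r.2)))
      + weight (p.1 ++ n :: (q.1 ++ n :: (n + 2) :: (r.1 ++ (n + 2) :: r.2)))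
      + weight (p.1 ++ (n + 1) :: (q.1 ++ (n + 2) :: (r.1 ++ (n + 1) :: (n + 2) :: r.2)))
      + weight (p.1 ++ n :: (n + 1) :: (q.1 ++ n :: (n + 2) :: (r.1 ++ (n + 1) :: (n + 2) :: r.2)))
    = weight (p.1 ++ (n + 1) :: n :: (q.1 ++ n :: (r.1 ++ (n + 1) :: r.2)))
      + weight (p.1 ++ n :: (q.1 ++ (n + 2) :: n :: (r.1 ++ (n + 2) :: r.2)))
      + weight (p.1 ++ (n + 1) :: (q.1 ++ (n + 2) :: (r.1 ++ (n + 2) :: (n + 1) :: r.2)))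
      + weight (p.1 ++ (n + 1) :: n :: (q.1 ++ (n + 2) :: n :: (r.1 ++ (n + 2) :: (n + 1) :: r.2))) :=
  by decide +kernel

theorem weight_h3_identity {A B C : ℕ} {s₀ s₁ s₂ s₃ : List ℕ}
    (hAB : A ≠ B) (hAC : A ≠ C) (hBC : B ≠ C) (hA : A ∉ s₀ ++ s₁ ++ s₂ ++ s₃)
    (hB : B ∉ s₀ ++ s₁ ++ s₂ ++ s₃) (hC : C ∉ s₀ ++ s₁ ++ s₂ ++ s₃) :
    weight (s₀ ++ A :: B :: (s₁ ++ A :: (s₂ ++ B :: s₃)))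
      + weight (s₀ ++ A :: (s₁ ++ A :: C :: (s₂ ++ C :: s₃)))
      + weight (s₀ ++ B :: (s₁ ++ C :: (s₂ ++ B :: C :: s₃)))
      + weight (s₀ ++ A :: B :: (s₁ ++ A :: C :: (s₂ ++ B :: C :: s₃)))
    = weight (s₀ ++ B :: A :: (s₁ ++ A :: (s₂ ++ B :: s₃)))
      + weight (s₀ ++ A :: (s₁ ++ C :: A :: (s₂ ++ C :: s₃)))
      + weight (s₀ ++ B :: (s₁ ++ C :: (s₂ ++ C :: B :: s₃)))
      + weight (s₀ ++ B :: A :: (s₁ ++ C :: A :: (s₂ ++ C :: B :: s₃))) := by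
  set σ := s₀ ++ s₁ ++ s₂ ++ s₃
  have hlen : σ.length = s₀.length + s₁.length + s₂.length + s₃.length := by simp [σ, add_assoc]
  by_cases hn : σ.length = 2 ∨ σ.length = 4
  swap
  · simp (disch := simp only [List.length_append, List.length_cons]; omega) only
      [weight_eq_zero_of_length_ne]
  -- Relabel by position in `σ ++ [A, B, C]`: `σ` becomes its normal form, `A, B, C` become
  -- `n, n + 1, n + 2` with `n = σ.length`.
  have hposA : (σ ++ [A, B, C]).idxOf A = σ.length := by simp [List.idxOf_append_of_notMem hA]
  have hposB : (σ ++ [A, B, C]).idxOf B = σ.length + 1 := by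
    simp [List.idxOf_append_of_notMem hB, hAB]
  have hposC : (σ ++ [A, B, C]).idxOf C = σ.length + 2 := by
    simp [List.idxOf_append_of_notMem hC, hAC, hBC]
  have hnormal := normalForm_mem_normalWords σ
  have hsplit : ∀ f : ℕ → ℕ, σ.map f = s₀.map f ++ (s₁.map f ++ (s₂.map f ++ s₃.map f)) :=
    fun f => by simp [σ]
  rw [normalForm, hsplit] at hnormal
  have key := weight_h3_identity_of_normal _ (by simpa using hn) _ hnormal _
    (List.mem_zip_inits_tails.2 rfl) _ (List.mem_zip_inits_tails.2 rfl) _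
    (List.mem_zip_inits_tails.2 rfl)
  dsimp only at key
  rw [← hposC, ← hposB, ← hposA,
    ← map_idxOf_append_of_subset [A, B, C] (fun _ h => by simp [σ, h] : s₀ ⊆ σ),
    ← map_idxOf_append_of_subset [A, B, C] (fun _ h => by simp [σ, h] : s₁ ⊆ σ),
    ← map_idxOf_append_of_subset [A, B, C] (fun _ h => by simp [σ, h] : s₂ ⊆ σ),
    ← map_idxOf_append_of_subset [A, B, C] (fun _ h => by simp [σ, h] : s₃ ⊆ σ)] at key
  simp only [← List.map_cons (f := (σ ++ [A, B, C]).idxOf), ← List.map_append] at key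
  simpa (disch := simp +contextual [σ, or_imp]) only [weight_map_idxOf] using key

theorem sublistSum_h2_blocks {A B : ℕ} {s₀ s₁ s₂ : List ℕ} (hAB : A ≠ B)
    (hA : A ∉ s₀ ++ s₁ ++ s₂) (hB : B ∉ s₀ ++ s₁ ++ s₂) :
    (sublistSum [A, B] fun t₁ => sublistSum [B, A] fun t₂ =>
      weight (s₀ ++ (t₁ ++ (s₁ ++ (t₂ ++ s₂))))) = weight (s₀ ++ (s₁ ++ s₂)) := by
  obtain ⟨hA₀, hA₁, hA₂⟩ : A ∉ s₀ ∧ A ∉ s₁ ∧ A ∉ s₂ := by simpa using hA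
  obtain ⟨hB₀, hB₁, hB₂⟩ : B ∉ s₀ ∧ B ∉ s₁ ∧ B ∉ s₂ := by simpa using hB
  simp only [sublistSum_pair, List.nil_append, List.cons_append]
  simp (disch := simp [List.count_eq_zero_of_not_mem, *, hAB.symm]) only
    [weight_eq_zero_of_count_eq_one A, weight_eq_zero_of_count_eq_one B, add_zero]
  rw [weight_h2_pattern_eq_zero hAB hA hB, weight_replace_fresh_letter hA hB]
  linear_combination CharTwo.add_self_eq_zero (weight (s₀ ++ A :: (s₁ ++ A :: s₂)))

theorem sublistSum_h3_blocks {A B C : ℕ} {s₀ s₁ s₂ s₃ : List ℕ}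
    (hAB : A ≠ B) (hAC : A ≠ C) (hBC : B ≠ C) (hA : A ∉ s₀ ++ s₁ ++ s₂ ++ s₃)
    (hB : B ∉ s₀ ++ s₁ ++ s₂ ++ s₃) (hC : C ∉ s₀ ++ s₁ ++ s₂ ++ s₃) :
    (sublistSum [A, B] fun t₁ => sublistSum [A, C] fun t₂ => sublistSum [B, C] fun t₃ =>
      weight (s₀ ++ (t₁ ++ (s₁ ++ (t₂ ++ (s₂ ++ (t₃ ++ s₃))))))) =
    sublistSum [B, A] fun t₁ => sublistSum [C, A] fun t₂ => sublistSum [C, B] fun t₃ =>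
      weight (s₀ ++ (t₁ ++ (s₁ ++ (t₂ ++ (s₂ ++ (t₃ ++ s₃)))))) := by
  obtain ⟨hA₀, hA₁, hA₂, hA₃⟩ : A ∉ s₀ ∧ A ∉ s₁ ∧ A ∉ s₂ ∧ A ∉ s₃ := by simpa using hA
  obtain ⟨hB₀, hB₁, hB₂, hB₃⟩ : B ∉ s₀ ∧ B ∉ s₁ ∧ B ∉ s₂ ∧ B ∉ s₃ := by simpa using hB
  obtain ⟨hC₀, hC₁, hC₂, hC₃⟩ : C ∉ s₀ ∧ C ∉ s₁ ∧ C ∉ s₂ ∧ C ∉ s₃ := by simpa using hC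
  simp only [sublistSum_pair, List.nil_append, List.cons_append]
  simp (disch := simp [List.count_eq_zero_of_not_mem, *, hAB.symm, hAC.symm, hBC.symm]) only
    [weight_eq_zero_of_count_eq_one A, weight_eq_zero_of_count_eq_one B,
      weight_eq_zero_of_count_eq_one C, add_zero]
  -- The surviving terms common to both sides cancel.
  linear_combination weight_h3_identity hAB hAC hBC hA hB hC

theorem invariant_map_of_injective {f : ℕ → ℕ} (hf : Function.Injective f) (p : List ℕ) :
    invariant (p.map f) = invariant p := by
  rw [invariant, sublistSum_map]
  exact sublistSum_congr fun s _ => weight_map_of_injOn hf.injOn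

theorem invariant_h1 (x y : List ℕ) (A : ℕ) :
    invariant (x ++ [A, A] ++ y) = invariant (x ++ y) := by
  simp only [invariant, List.append_assoc, sublistSum_append]
  simp only [sublistSum_pair, List.nil_append, List.cons_append]
  refine sublistSum_congr fun s _ => ?_
  have hAA : (sublistSum y fun r => weight (s ++ A :: A :: r)) = 0 := by
    simp [sublistSum, weight_append_cons_cons_self]
  rw [hAA, add_zero, add_assoc, CharTwo.add_self_eq_zero, add_zero]

theorem invariant_h2 (x y z : List ℕ) (A B : ℕ) (hAB : A ≠ B) (hA : A ∉ x ++ y ++ z)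
    (hB : B ∉ x ++ y ++ z) :
    invariant (x ++ [A, B] ++ y ++ [B, A] ++ z) = invariant (x ++ y ++ z) := by
  simp only [invariant, List.append_assoc, sublistSum_append]
  -- Move the sums over the choices among the moved letters innermost.
  simp only [sublistSum_comm [A, B] y, sublistSum_comm [A, B] z, sublistSum_comm [B, A] z]
  refine sublistSum_congr fun s₀ h₀ => sublistSum_congr fun s₁ h₁ =>
    sublistSum_congr fun s₂ h₂ => ?_
  have hsub := (h₀.append h₁).append h₂
  exact sublistSum_h2_blocks hAB (fun h => hA (hsub.subset h)) (fun h => hB (hsub.subset h))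

theorem invariant_h3 (x y z t : List ℕ) (A B C : ℕ) (hAB : A ≠ B) (hAC : A ≠ C) (hBC : B ≠ C)
    (hA : A ∉ x ++ y ++ z ++ t) (hB : B ∉ x ++ y ++ z ++ t) (hC : C ∉ x ++ y ++ z ++ t) :
    invariant (x ++ [A, B] ++ y ++ [A, C] ++ z ++ [B, C] ++ t) =
      invariant (x ++ [B, A] ++ y ++ [C, A] ++ z ++ [C, B] ++ t) := by
  simp only [invariant, List.append_assoc, sublistSum_append]
  simp only [sublistSum_comm [A, B] y, sublistSum_comm [A, B] z, sublistSum_comm [A, B] t,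
    sublistSum_comm [A, C] z, sublistSum_comm [A, C] t, sublistSum_comm [B, C] t,
    sublistSum_comm [B, A] y, sublistSum_comm [B, A] z, sublistSum_comm [B, A] t,
    sublistSum_comm [C, A] z, sublistSum_comm [C, A] t, sublistSum_comm [C, B] t]
  refine sublistSum_congr fun s₀ h₀ => sublistSum_congr fun s₁ h₁ =>
    sublistSum_congr fun s₂ h₂ => sublistSum_congr fun s₃ h₃ => ?_
  have hsub := ((h₀.append h₁).append h₂).append h₃
  exact sublistSum_h3_blocks hAB hAC hBC (fun h => hA (hsub.subset h))
    (fun h => hB (hsub.subset h)) (fun h => hC (hsub.subset h))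

theorem Move.invariant_eq {w₁ w₂ : List ℕ} (h : Move w₁ w₂) : invariant w₁ = invariant w₂ := by
  cases h with
  | iso h =>
    obtain ⟨f, hf, rfl⟩ := h
    exact (invariant_map_of_injective hf w₁).symm
  | h1 x y A _ => exact invariant_h1 x y A
  | h2 x y z A B hAB hA hB => exact invariant_h2 x y z A B hAB hA hB
  | h3 x y z t A B C hAB hAC hBC hA hB hC =>
    exact invariant_h3 x y z t A B C hAB hAC hBC hA hB hC

theorem Homotopic.invariant_eq {w₁ w₂ : List ℕ} (h : Homotopic w₁ w₂) :
    invariant w₁ = invariant w₂ := by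
  induction h with
  | rel _ _ h => exact h.invariant_eq
  | refl => rfl
  | symm _ _ _ ih => exact ih.symm
  | trans _ _ _ _ _ ih₁ ih₂ => exact ih₁.trans ih₂

theorem invariant_abacdcbd : invariant [0, 1, 0, 2, 3, 2, 1, 3] = 1 := by decide +kernel

theorem invariant_abacbdcd : invariant [0, 1, 0, 2, 1, 3, 2, 3] = 0 := by decide +kernel

/-- ABACDCBD is not homotopic to ABACBDCD (A,B,C,D encoded as 0,1,2,3). -/
theorem abacdcbd_not_homotopic_abacbdcd :
    ¬ Homotopic [0, 1, 0, 2, 3, 2, 1, 3] [0, 1, 0, 2, 1, 3, 2, 3] := by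
  intro h
  have := h.invariant_eq
  rw [invariant_abacdcbd, invariant_abacbdcd] at this
  exact one_ne_zero this
end
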